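/- arXiv:2106.01118 — 5 statements merged into one kernel-verified Lean document; each statement's English description precedes it below -/
import Mathlib

section
/- (Lemma 5) Let x₀ : M and T ≥ 1 satisfy F^[T] x₀ = x₀ with the states F^[j] x₀ for j < T pairwise distinct, and suppose the periodic orbit χ = {F^[j] x₀ | j < T} is isolated: for every x ∉ χ, F x ∉ χ. Let k : ℕ and λ = exp(2 π i k / T). Then the observable c = ∑_{j < T} λ^j • b (F^[j] x₀) is a Koopman eigenfunction with eigenvalue λ: c ∘ F = λ • c. -/
/-- The indicator observable `b q : M → ℂ`: `(b q) x = 1` if `x = q` and `0` otherwise. -/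
def indicator {M : Type*} [DecidableEq M] (q : M) : M → ℂ :=
  fun x => if x = q then 1 else 0

/-!
Since `λ ^ T = 1` and `F^[T] x₀ = x₀`, the summand `j ↦ λ ^ j • b (F^[j] x₀)` is `T`-periodic,
so the sum defining `c` may be shifted by one. After the shift it remains to see
`b (F^[j+1] x₀) ∘ F = b (F^[j] x₀)`: isolation puts every preimage of an orbit point on the
orbit, and `F` is injective on periodic points.
-/

open Function Finset

theorem Finset.sum_range_succ_eq_of_apply_eq {β : Type*} [AddCancelCommMonoid β] (g : ℕ → β)
    (T : ℕ) (hg : g T = g 0) : ∑ j ∈ range T, g (j + 1) = ∑ j ∈ range T, g j := by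
  have h := (sum_range_succ' g T).symm.trans (sum_range_succ g T)
  rwa [hg, add_left_inj] at h

theorem Complex.exp_two_pi_mul_I_mul_div_pow_self (k T : ℕ) :
    Complex.exp (2 * Real.pi * Complex.I * k / T) ^ T = 1 := by
  rcases eq_or_ne T 0 with rfl | hT
  · exact pow_zero _
  rw [← Complex.exp_nat_mul, ← Complex.exp_nat_mul_two_pi_mul_I k]
  congr 1
  field_simp [Nat.cast_ne_zero.mpr hT]

section IsolatedOrbit

variable {M : Type*} {F : M → M} {x₀ : M} {T : ℕ}

def orbitSet (F : M → M) (x₀ : M) (T : ℕ) : Set M :=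
  {y : M | ∃ j < T, F^[j] x₀ = y}

theorem Function.IsPeriodicPt.iterate_mem_orbitSet (hper : IsPeriodicPt F T x₀) (hT : 0 < T)
    (n : ℕ) : F^[n] x₀ ∈ orbitSet F x₀ T :=
  ⟨n % T, Nat.mod_lt n hT, hper.iterate_mod_apply n⟩

theorem Function.IsPeriodicPt.apply_eq_iterate_succ_iff (hper : IsPeriodicPt F T x₀)
    (hT : 0 < T) (hiso : ∀ x : M, x ∉ orbitSet F x₀ T → F x ∉ orbitSet F x₀ T)
    (x : M) (n : ℕ) : F x = F^[n + 1] x₀ ↔ x = F^[n] x₀ := by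
  refine ⟨fun h => ?_, fun h => by rw [h, iterate_succ_apply']⟩
  have hFx : F x ∈ orbitSet F x₀ T := h ▸ hper.iterate_mem_orbitSet hT (n + 1)
  obtain ⟨i, -, rfl⟩ : x ∈ orbitSet F x₀ T := by_contra fun hx => hiso x hx hFx
  have hperiodic (m : ℕ) : F^[m] x₀ ∈ periodicPts F := mk_mem_periodicPts hT (hper.apply_iterate m)
  rw [iterate_succ_apply'] at h
  exact (bijOn_periodicPts F).injOn (hperiodic i) (hperiodic n) h

theorem indicator_apply_iterate_succ [DecidableEq M] (hper : IsPeriodicPt F T x₀) (hT : 0 < T)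
    (hiso : ∀ x : M, x ∉ orbitSet F x₀ T → F x ∉ orbitSet F x₀ T) (x : M) (n : ℕ) :
    indicator (F^[n + 1] x₀) (F x) = indicator (F^[n] x₀) x := by
  simp only [indicator, hper.apply_eq_iterate_succ_iff hT hiso]

end IsolatedOrbit

theorem isolated_periodic_orbit_eigenfunction_general
    {M : Type*} [DecidableEq M] (F : M → M)
    (x₀ : M) (T : ℕ) (hper : F^[T] x₀ = x₀)
    (hiso : ∀ x : M, x ∉ {y : M | ∃ j < T, F^[j] x₀ = y} →
      F x ∉ {y : M | ∃ j < T, F^[j] x₀ = y})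
    (k : ℕ) (lam : ℂ) (hlam : lam = Complex.exp (2 * Real.pi * Complex.I * k / T)) :
    (fun x => ∑ j ∈ Finset.range T, lam ^ j • indicator (F^[j] x₀) x) ∘ F
      = lam • fun x => ∑ j ∈ Finset.range T, lam ^ j • indicator (F^[j] x₀) x := by
  have hlamT : lam ^ T = 1 := hlam ▸ Complex.exp_two_pi_mul_I_mul_div_pow_self k T
  funext x
  simp only [comp_apply, Pi.smul_apply, smul_eq_mul, mul_sum]
  rw [← sum_range_succ_eq_of_apply_eq (fun j => lam ^ j * indicator (F^[j] x₀) (F x)) T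
    (by simp only [hlamT, hper, pow_zero, iterate_zero_apply])]
  refine sum_congr rfl fun j hj => ?_
  rw [indicator_apply_iterate_succ hper (Nat.zero_lt_of_lt (mem_range.mp hj)) hiso, pow_succ',
    mul_assoc]

/-- Lemma 5: given an isolated period-`T` orbit `χ = {F^[j] x₀ | j < T}`
(with the `T` states pairwise distinct), for `λ = exp(2πik/T)` the observable
`c = ∑_{j < T} λ^j • b (F^[j] x₀)` is a Koopman eigenfunction with eigenvalue `λ`:
`c ∘ F = λ • c`. -/
theorem isolated_periodic_orbit_eigenfunction
    {M : Type*} [Fintype M] [Nonempty M] [DecidableEq M] (F : M → M)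
    (x₀ : M) (T : ℕ) (hT : 1 ≤ T) (hper : F^[T] x₀ = x₀)
    (hdist : ∀ i < T, ∀ j < T, F^[i] x₀ = F^[j] x₀ → i = j)
    (hiso : ∀ x : M, x ∉ {y : M | ∃ j < T, F^[j] x₀ = y} →
      F x ∉ {y : M | ∃ j < T, F^[j] x₀ = y})
    (k : ℕ) (lam : ℂ) (hlam : lam = Complex.exp (2 * Real.pi * Complex.I * k / T)) :
    (fun x => ∑ j ∈ Finset.range T, lam ^ j • indicator (F^[j] x₀) x) ∘ F
      = lam • fun x => ∑ j ∈ Finset.range T, lam ^ j • indicator (F^[j] x₀) x :=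
  isolated_periodic_orbit_eigenfunction_general F x₀ T hper hiso k lam hlam
end

section
/- (Lemma 6) Let x₀ : M and let T ≥ 1 be the minimal period of x₀, i.e. F^[T] x₀ = x₀ and F^[j] x₀ ≠ x₀ for 1 ≤ j < T. Let S = {x : M | ∃ n : ℕ, F^[n] x = x₀} be the connected component of states eventually reaching x₀, and for x ∈ S let D x be the least n with F^[n] x = x₀. Let k : ℕ and λ = exp(2 π i k / T). Then the observable c : M → ℂ defined by c x = λ^(−D x) for x ∈ S and c x = 0 for x ∉ S is a Koopman eigenfunction with eigenvalue λ: c ∘ F = λ • c. -/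
/-!
Write `D x` for the least number of steps from `x` to `x₀`. If `x` reaches `x₀` so does
`F x`, and `F^[D (F x) + 1] x = x₀ = F^[D x] x` with `D x ≤ D (F x) + 1`; hence `x₀` is
periodic with period `D (F x) + 1 - D x`, which the minimal period `T` divides. As `λ` is a
`T`-th root of unity, `λ ^ (-D (F x)) = λ * λ ^ (-D x)`. Off the basin both sides vanish,
since `F x` reaches `x₀` only if `x` does.
-/

open Function

namespace Function

variable {α : Type*} {f : α → α} {x y : α}

theorem isPeriodicPt_sub_of_iterate_eq {a b : ℕ} (ha : f^[a] x = y) (hb : f^[b] x = y)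
    (hab : a ≤ b) : IsPeriodicPt f (b - a) y := by
  show f^[b - a] y = y
  rw [← ha, ← iterate_add_apply, Nat.sub_add_cancel hab, hb, ha]

theorem minimalPeriod_eq_of_forall_ne {n : ℕ} (hn : 1 ≤ n) (hy : IsPeriodicPt f n y)
    (hmin : ∀ j : ℕ, 1 ≤ j → j < n → f^[j] y ≠ y) : minimalPeriod f y = n :=
  le_antisymm (hy.minimalPeriod_le hn) <| not_lt.1 fun hlt =>
    hmin _ (hy.minimalPeriod_pos hn) hlt iterate_minimalPeriod

theorem exists_iterate_apply_eq_iff {n : ℕ} (hn : 1 ≤ n) (hy : IsPeriodicPt f n y) :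
    (∃ m, f^[m] (f x) = y) ↔ ∃ m, f^[m] x = y := by
  constructor
  · rintro ⟨m, hm⟩
    exact ⟨m + 1, hm⟩
  · rintro ⟨m, hm⟩
    refine ⟨m + (n - 1), ?_⟩
    rw [← iterate_succ_apply, show (m + (n - 1)).succ = n + m by omega, iterate_add_apply, hm]
    exact hy

theorem find_iterate_apply_add_one_modEq [DecidableEq α] (h : ∃ m, f^[m] x = y)
    (h' : ∃ m, f^[m] (f x) = y) : Nat.find h' + 1 ≡ Nat.find h [MOD minimalPeriod f y] := by
  have hle : Nat.find h ≤ Nat.find h' + 1 := Nat.find_min' h (Nat.find_spec h')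
  refine ((Nat.modEq_iff_dvd' hle).2 ?_).symm
  exact (isPeriodicPt_sub_of_iterate_eq (Nat.find_spec h) (Nat.find_spec h') hle).minimalPeriod_dvd

end Function

theorem zpow_neg_eq_mul_zpow_neg_of_modEq {G₀ : Type*} [GroupWithZero G₀] {ζ : G₀} {n a b : ℕ}
    (hζ : ζ ≠ 0) (hζn : ζ ^ n = 1) (hab : a + 1 ≡ b [MOD n]) :
    ζ ^ (-(a : ℤ)) = ζ * ζ ^ (-(b : ℤ)) := by
  have hpow : ζ ^ b = ζ ^ a * ζ := by
    rw [← pow_succ, pow_eq_pow_mod b hζn, pow_eq_pow_mod (a + 1) hζn, hab]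
  rw [zpow_neg, zpow_neg, zpow_natCast, zpow_natCast, hpow, mul_inv_rev, mul_inv_cancel_left₀ hζ]

theorem Complex.exp_two_pi_I_mul_div_pow_eq_one (k : ℕ) {n : ℕ} (hn : n ≠ 0) :
    Complex.exp (2 * Real.pi * Complex.I * k / n) ^ n = 1 := by
  rw [← Complex.exp_nat_mul, mul_div_cancel₀ _ (Nat.cast_ne_zero.2 hn), mul_comm,
    Complex.exp_nat_mul_two_pi_mul_I]

theorem connected_component_periodic_orbit_eigenfunction_general
    {M : Type*} [DecidableEq M] (F : M → M)
    (x₀ : M) (T : ℕ) (hT : 1 ≤ T) (hper : F^[T] x₀ = x₀)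
    (hmin : ∀ j : ℕ, 1 ≤ j → j < T → F^[j] x₀ ≠ x₀)
    (k : ℕ) (lam : ℂ) (hlam : lam = Complex.exp (2 * Real.pi * Complex.I * k / T))
    (c : M → ℂ)
    (hc₁ : ∀ (x : M) (h : ∃ n : ℕ, F^[n] x = x₀), c x = lam ^ (-(Nat.find h : ℤ)))
    (hc₂ : ∀ x : M, ¬ (∃ n : ℕ, F^[n] x = x₀) → c x = 0) :
    c ∘ F = lam • c := by
  have hperiod : minimalPeriod F x₀ = T := minimalPeriod_eq_of_forall_ne hT hper hmin
  have hlamT : lam ^ T = 1 := hlam ▸ Complex.exp_two_pi_I_mul_div_pow_eq_one k (by omega)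
  have hlam0 : lam ≠ 0 := hlam ▸ Complex.exp_ne_zero _
  funext x
  rw [comp_apply, Pi.smul_apply, smul_eq_mul]
  by_cases h : ∃ n, F^[n] x = x₀
  · have h' := (exists_iterate_apply_eq_iff hT hper).2 h
    rw [hc₁ x h, hc₁ (F x) h']
    exact zpow_neg_eq_mul_zpow_neg_of_modEq hlam0 hlamT
      (hperiod ▸ find_iterate_apply_add_one_modEq h h')
  · rw [hc₂ x h, hc₂ (F x) (mt (exists_iterate_apply_eq_iff hT hper).1 h), mul_zero]

/-- Lemma 6: let `T ≥ 1` be the minimal period of `x₀`, let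
`S = {x | ∃ n, F^[n] x = x₀}` be the connected component of states eventually reaching
`x₀`, and for `x ∈ S` let `D x` be the least `n` with `F^[n] x = x₀`. For
`λ = exp(2πik/T)`, the observable `c` with `c x = λ^(−D x)` on `S` and `c x = 0` off `S`
is a Koopman eigenfunction with eigenvalue `λ`: `c ∘ F = λ • c`. -/
theorem connected_component_periodic_orbit_eigenfunction
    {M : Type*} [Fintype M] [Nonempty M] [DecidableEq M] (F : M → M)
    (x₀ : M) (T : ℕ) (hT : 1 ≤ T) (hper : F^[T] x₀ = x₀)
    (hmin : ∀ j : ℕ, 1 ≤ j → j < T → F^[j] x₀ ≠ x₀)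
    (k : ℕ) (lam : ℂ) (hlam : lam = Complex.exp (2 * Real.pi * Complex.I * k / T))
    (c : M → ℂ)
    (hc₁ : ∀ (x : M) (h : ∃ n : ℕ, F^[n] x = x₀), c x = lam ^ (-(Nat.find h : ℤ)))
    (hc₂ : ∀ x : M, ¬ (∃ n : ℕ, F^[n] x = x₀) → c x = 0) :
    c ∘ F = lam • c :=
  connected_component_periodic_orbit_eigenfunction_general F x₀ T hT hper hmin k lam hlam c hc₁ hc₂
end

section
/- (Theorem 1, multiplicity part) The algebraic multiplicity of the eigenvalue 0 of the Koopman operator K equals the number of states not included in any periodic orbit: the ℂ-dimension of the generalized eigenspace of K for eigenvalue 0 (the supremum over k of the kernels of K^k, equivalently the kernel of K^(card M)) equals the cardinality of the set {x : M | ∀ T ≥ 1, F^[T] x ≠ x}. -/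
/-- The Koopman operator: `(K g) x = g (F x)`. -/
def koopman {M : Type*} (F : M → M) : Module.End ℂ (M → ℂ) where
  toFun g := g ∘ F
  map_add' _ _ := rfl
  map_smul' _ _ := rfl

/-- Theorem 1, multiplicity part: the algebraic multiplicity of the
eigenvalue `0` of the Koopman operator (the dimension of the generalized eigenspace for
`0`, i.e. of the supremum over `k` of the kernels of `K^k`) equals the number of states
not included in any periodic orbit. -/
theorem multiplicity_zero_eigenvalue_eq_card_nonperiodic
    {M : Type*} [Fintype M] [Nonempty M] (F : M → M) :
    Module.finrank ℂ ↥(⨆ k : ℕ, LinearMap.ker (koopman F ^ k))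
      = Nat.card {x : M | ∀ T : ℕ, 1 ≤ T → F^[T] x ≠ x} := by
  classical
  set N := Fintype.card M with hN
  -- K^k g = g ∘ F^[k]
  have hpow : ∀ (k : ℕ) (g : M → ℂ), (koopman F ^ k) g = g ∘ F^[k] := by
    intro k
    induction k with
    | zero => intro g; rfl
    | succ k ih =>
      intro g
      rw [pow_succ]
      show (koopman F ^ k) ((koopman F) g) = _
      rw [ih]
      funext x
      show g (F (F^[k] x)) = g (F^[k+1] x)
      rw [Function.iterate_succ_apply' F k x]
  have hker : ∀ (k : ℕ) (g : M → ℂ),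
      g ∈ LinearMap.ker (koopman F ^ k) ↔ ∀ x, g (F^[k] x) = 0 := by
    intro k g
    rw [LinearMap.mem_ker, hpow]
    constructor
    · intro h x; exact congrFun h x
    · intro h; funext x; exact h x
  -- every point in the range of F^[N] is periodic
  have hperiodicN : ∀ y : M, ∃ T, 1 ≤ T ∧ F^[T] (F^[N] y) = F^[N] y := by
    intro y
    have hninj : ¬ Function.Injective (fun i : Fin (N + 1) => F^[(i : ℕ)] y) := by
      intro hinj
      have := Fintype.card_le_of_injective _ hinj
      simp [hN] at this
    rw [Function.not_injective_iff] at hninj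
    obtain ⟨i, j, hij, hne⟩ := hninj
    -- wlog a < b with F^[a] y = F^[b] y
    obtain ⟨a, b, hab, heq⟩ : ∃ a b : ℕ, a < b ∧ b ≤ N ∧ F^[a] y = F^[b] y := by
      rcases lt_or_gt_of_ne (Fin.val_ne_of_ne hne) with h | h
      · exact ⟨i, j, h, Nat.lt_succ_iff.mp j.isLt, hij⟩
      · exact ⟨j, i, h, Nat.lt_succ_iff.mp i.isLt, hij.symm⟩
    obtain ⟨hbN, heq⟩ := heq
    refine ⟨b - a, Nat.le_sub_of_add_le (by omega), ?_⟩
    have haN : a ≤ N := le_of_lt (lt_of_lt_of_le hab hbN)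
    calc F^[b - a] (F^[N] y) = F^[(b - a) + N] y := by
          rw [Function.iterate_add_apply]
      _ = F^[(N - a) + b] y := by congr 1; omega
      _ = F^[N - a] (F^[b] y) := by rw [Function.iterate_add_apply]
      _ = F^[N - a] (F^[a] y) := by rw [heq]
      _ = F^[(N - a) + a] y := by rw [Function.iterate_add_apply]
      _ = F^[N] y := by congr 1; omega
  -- periodic points lie in the range of every iterate
  have hrange : ∀ (x : M), (∃ T, 1 ≤ T ∧ F^[T] x = x) → ∀ m, ∃ z, F^[m] z = x := by
    rintro x ⟨T, hT, hTx⟩ m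
    have hiter : ∀ c, F^[T * c] x = x := by
      intro c
      induction c with
      | zero => simp
      | succ c ih =>
        rw [Nat.mul_succ, Function.iterate_add_apply, hTx, ih]
    refine ⟨F^[T * m - m] x, ?_⟩
    have hm : m ≤ T * m := Nat.le_mul_of_pos_left m hT
    rw [← Function.iterate_add_apply, show m + (T * m - m) = T * m by omega]
    exact hiter m
  -- the supremum stabilizes at k = N
  have hsup : (⨆ k : ℕ, LinearMap.ker (koopman F ^ k))
      = LinearMap.ker (koopman F ^ N) := by
    apply le_antisymm
    · apply iSup_le
      intro m g hg
      rw [hker] at hg ⊢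
      intro x
      obtain ⟨T, hT, hTx⟩ := hperiodicN x
      obtain ⟨z, hz⟩ := hrange (F^[N] x) ⟨T, hT, hTx⟩ m
      rw [← hz]
      exact hg z
    · exact le_iSup (fun k => LinearMap.ker (koopman F ^ k)) N
  rw [hsup]
  -- the set of periodic points
  set P : Set M := Set.range (F^[N]) with hP
  have hPperiodic : ∀ x : M, x ∈ P ↔ ∃ T, 1 ≤ T ∧ F^[T] x = x := by
    intro x
    constructor
    · rintro ⟨y, rfl⟩; exact hperiodicN y
    · intro h
      obtain ⟨z, hz⟩ := hrange x h N
      exact ⟨z, hz⟩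
  -- restriction map to P
  let π : (M → ℂ) →ₗ[ℂ] (↥P → ℂ) := LinearMap.funLeft ℂ ℂ (fun p : ↥P => (p : M))
  have hkerπ : LinearMap.ker π = LinearMap.ker (koopman F ^ N) := by
    ext g
    rw [hker, LinearMap.mem_ker]
    constructor
    · intro h x
      have := congrFun h ⟨F^[N] x, ⟨x, rfl⟩⟩
      exact this
    · intro h
      funext p
      obtain ⟨p, y, rfl⟩ := p
      exact h y
  have hsurj : Function.Surjective π :=
    LinearMap.funLeft_surjective_of_injective ℂ ℂ _ Subtype.val_injective
  have hrn := LinearMap.finrank_range_add_finrank_ker π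
  rw [LinearMap.range_eq_top.mpr hsurj, finrank_top] at hrn
  have hcard : Module.finrank ℂ (↥P → ℂ) = Fintype.card ↥P := by
    rw [Module.finrank_pi ℂ]
  have hfull : Module.finrank ℂ (M → ℂ) = N := by
    rw [Module.finrank_pi ℂ]
  rw [hcard, hfull, hkerπ] at hrn
  -- count the nonperiodic states
  have hset : {x : M | ∀ T : ℕ, 1 ≤ T → F^[T] x ≠ x} = Pᶜ := by
    ext x
    simp only [Set.mem_setOf_eq, Set.mem_compl_iff, hPperiodic x]
    push_neg
    rfl
  rw [hset, Nat.card_eq_fintype_card]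
  have hcompl : Fintype.card ↥(Pᶜ) = N - Fintype.card ↥P := by
    rw [Fintype.card_compl_set]
  have hPle : Fintype.card ↥P ≤ N :=
    Fintype.card_le_of_injective Subtype.val Subtype.val_injective
  omega
end

section
/- (Theorem 2) The multiplicity of the eigenvalue 1 of the Koopman operator equals the number of weakly connected components of the state-transition network: the ℂ-dimension of the eigenspace {g : M → ℂ | g ∘ F = g} equals the cardinality of the quotient of M by the equivalence relation generated by the relation R with R x y ↔ F x = y. -/
/-- The eigenspace of the Koopman operator for eigenvalue `1`: the observables `g` with
`g ∘ F = g`, as a submodule of `M → ℂ`. -/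
noncomputable def fixedSpace {M : Type*} (F : M → M) : Submodule ℂ (M → ℂ) where
  carrier := {g : M → ℂ | g ∘ F = g}
  add_mem' := by
    intro a b ha hb
    funext x
    exact congrArg₂ (· + ·) (congrFun ha x) (congrFun hb x)
  zero_mem' := rfl
  smul_mem' := by
    intro c g hg
    funext x
    exact congrArg (c * ·) (congrFun hg x)

lemma fixed_const_on {M : Type*} (F : M → M) (g : M → ℂ) (hg : g ∘ F = g)
    {x y : M} (h : Relation.EqvGen (fun x y : M => F x = y) x y) : g x = g y := by
  induction h with
  | rel a b hab => rw [← hab]; exact (congrFun hg a).symm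
  | refl a => rfl
  | symm a b _ ih => exact ih.symm
  | trans a b c _ _ ih1 ih2 => exact ih1.trans ih2

noncomputable def fixedEquiv {M : Type*} (F : M → M) :
    (fixedSpace F) ≃ₗ[ℂ]
      (Quotient (Relation.EqvGen.setoid (fun x y : M => F x = y)) → ℂ) where
  toFun g := Quotient.lift g.1 (fun a b h => fixed_const_on F g.1 g.2 h)
  map_add' g h := by
    funext q
    induction q using Quotient.ind
    rfl
  map_smul' c g := by
    funext q
    induction q using Quotient.ind
    rfl
  invFun h := ⟨h ∘ Quotient.mk _, by
    funext x
    exact congrArg h (Quotient.sound (Relation.EqvGen.rel (r := fun a b => F a = b) x (F x) rfl)).symm⟩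
  left_inv g := by
    ext x
    rfl
  right_inv h := by
    funext q
    induction q using Quotient.ind
    rfl

/-- Theorem 2: the multiplicity of the eigenvalue `1` of the Koopman
operator (the dimension of the eigenspace `{g | g ∘ F = g}`) equals the number of
weakly connected components of the state-transition network (the cardinality of the
quotient of `M` by the equivalence relation generated by `R x y ↔ F x = y`). -/
theorem multiplicity_one_eigenvalue_eq_card_components
    {M : Type*} [Fintype M] [Nonempty M] (F : M → M) :
    Module.finrank ℂ (fixedSpace F)
      = Nat.card (Quotient (Relation.EqvGen.setoid (fun x y : M => F x = y))) := by
  classical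
  have : Fintype (Quotient (Relation.EqvGen.setoid (fun x y : M => F x = y))) :=
    Fintype.ofFinite _
  rw [(fixedEquiv F).finrank_eq, Module.finrank_pi, Nat.card_eq_fintype_card]
end

section
/- (Appendix Lemma 1) Let q r : M with q ≠ r and let m ≥ 1 satisfy F^[m] q = F^[m] r. Then the observable c = b q − b r satisfies P^m c = 0, where P is the Perron-Frobenius operator; moreover, if additionally F^[m−1] q ≠ F^[m−1] r, then P^(m−1) c ≠ 0, so c is a generalized Perron-Frobenius eigenfunction of rank exactly m with eigenvalue 0. -/
/-- The Perron-Frobenius operator: `(P g) x = ∑_{y : F y = x} g y`, the sum of `g` over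
the preimage of `x` under `F`. -/
noncomputable def perronFrobenius {M : Type*} [Fintype M] [DecidableEq M] (F : M → M) :
    Module.End ℂ (M → ℂ) where
  toFun g x := ∑ y ∈ Finset.univ.filter (fun y => F y = x), g y
  map_add' f g := by
    funext x
    simp [Finset.sum_add_distrib]
  map_smul' c g := by
    funext x
    simp [Finset.mul_sum]

lemma pf_indicator {M : Type*} [Fintype M] [DecidableEq M] (F : M → M) (q : M) :
    perronFrobenius F (indicator q) = indicator (F q) := by
  funext x
  show (∑ y ∈ Finset.univ.filter (fun y => F y = x), indicator q y) = _
  simp [indicator, Finset.sum_ite_eq', eq_comm]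

lemma pf_pow_indicator {M : Type*} [Fintype M] [DecidableEq M] (F : M → M) (q : M) (k : ℕ) :
    (perronFrobenius F ^ k) (indicator q) = indicator (F^[k] q) := by
  induction k generalizing q with
  | zero => simp
  | succ n ih =>
    rw [pow_succ, Module.End.mul_apply, pf_indicator, ih, ← Function.iterate_succ_apply]

/-- Appendix Lemma 1: if `q ≠ r` and `F^[m] q = F^[m] r` with `m ≥ 1`, then
`c = b q − b r` satisfies `P^m c = 0`; moreover, if additionally `F^[m−1] q ≠ F^[m−1] r`,
then `P^(m−1) c ≠ 0`, so `c` is a generalized Perron-Frobenius eigenfunction of rank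
exactly `m` with eigenvalue `0`. -/
theorem perronFrobenius_generalized_eigenfunction
    {M : Type*} [Fintype M] [Nonempty M] [DecidableEq M] (F : M → M)
    (q r : M) (hqr : q ≠ r) (m : ℕ) (hm : 1 ≤ m) (h : F^[m] q = F^[m] r) :
    (perronFrobenius F ^ m) (indicator q - indicator r) = 0 ∧
      (F^[m - 1] q ≠ F^[m - 1] r →
        (perronFrobenius F ^ (m - 1)) (indicator q - indicator r) ≠ 0) := by
  constructor
  · rw [map_sub, pf_pow_indicator, pf_pow_indicator, h, sub_self]
  · intro hne hc
    rw [map_sub, pf_pow_indicator, pf_pow_indicator] at hc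
    have := congrFun hc (F^[m-1] q)
    simp [indicator, hne] at this
end
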